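/- arXiv:2507.15596 — 3 statements merged into one kernel-verified Lean document; each statement's English description precedes it below -/
import Mathlib

section
/- Suppose that for each state the ample set is either {α} for a transition α independent of every other enabled transition, or equals the full enabled set. Then the ample-set conditions C0 (ample nonempty iff enabled nonempty) and C1 (no transition dependent on the ample set can fire before a transition of the ample set) are satisfied. -/
/-- The set of transitions enabled in a state. -/
def EnabledT {S T : Type*} (act : T → S → Option S) (s : S) : Set T :=
  {a | (act a s).isSome}

/-- States reachable from `s` by firing only transitions outside the set `A`. -/
inductive ReachAvoid {S T : Type*} (act : T → S → Option S) (A : Set T) : S → S → Prop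
  | refl (s : S) : ReachAvoid act A s s
  | step {s s' s'' : S} (b : T) :
      ReachAvoid act A s s' → b ∉ A → act b s' = some s'' → ReachAvoid act A s s''

/-- If each ample set is either a singleton `{α}` with `α` independent of all other
transitions and unlocking all transitions dependent on it, or the full enabled set,
then conditions C0 and C1 hold. -/
theorem stmt11 {S T : Type*} (act : T → S → Option S) (D : Set (T × T))
    (ample : S → Set T)
    (hsub : ∀ s, ample s ⊆ EnabledT act s)
    (hcases : ∀ s : S, ample s = EnabledT act s ∨
      ∃ α : T, ample s = {α} ∧
        (∀ β : T, β ≠ α → (α, β) ∉ D ∧ (β, α) ∉ D) ∧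
        (∀ s' : S, ReachAvoid act {α} s s' →
          ∀ β : T, (β, α) ∈ D → β ∉ EnabledT act s')) :
    (∀ s : S, ample s = ∅ ↔ EnabledT act s = ∅) ∧
    (∀ s s' : S, ReachAvoid act (ample s) s s' →
      ∀ β ∈ EnabledT act s', β ∉ ample s → ∀ α ∈ ample s, (β, α) ∉ D) := by
  constructor
  · intro s
    rcases hcases s with h | ⟨α, hα, _, _⟩
    · rw [h]
    · constructor
      · intro he
        rw [hα] at he
        exact absurd he (by simp)
      · intro he
        have := hsub s (by rw [hα]; rfl : α ∈ ample s)
        rw [he] at this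
        exact absurd this (by simp)
  · intro s s' hreach β hβ hβnot α hα
    rcases hcases s with h | ⟨γ, hγ, hind, _⟩
    · -- ample s = enabled s, so the avoiding path is trivial
      have key : ∀ t, ReachAvoid act (ample s) s t → t = s := by
        intro t h'
        induction h' with
        | refl => rfl
        | step b hr hb hact ih =>
          rw [ih] at hact
          exact absurd (show b ∈ EnabledT act s by rw [EnabledT, Set.mem_setOf_eq, hact]; rfl)
            (by rw [h] at hb; exact hb)
      have hs := key s' hreach
      subst hs
      rw [h] at hβnot
      exact absurd hβ hβnot
    · have hαγ : α = γ := by rw [hγ] at hα; exact hα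
      subst hαγ
      have hβα : β ≠ α := fun e => hβnot (by rw [hγ, e]; rfl)
      exact (hind β hβα).2
end

section
/- Let α be enabled in s and independent of each of β₁, …, βₙ, where s →β₁ s₁ →β₂ ⋯ →βₙ sₙ. Then α is enabled in sₙ, and firing α at any point of the sequence yields the same final state: α(sₙ) = βₙ(⋯β₁(α(s))⋯). -/
def Enabled {S : Type*} (α : S → Option S) (s : S) : Prop := (α s).isSome

def Indep {S : Type*} (α β : S → Option S) : Prop :=
  ∀ s : S, Enabled α s → Enabled β s →
    (∃ sβ, β s = some sβ ∧ Enabled α sβ) ∧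
    (∃ sα, α s = some sα ∧ Enabled β sα) ∧
    (β s).bind α = (α s).bind β

/-- Commutation over a path: if `α` is enabled in `σ 0` and independent of each
`β i` along the path `σ 0 →β₀ σ 1 → ⋯ →β(n-1) σ n`, then `α` is enabled in `σ n`
and firing `α` first and then replaying the path reaches `α (σ n)`. -/
theorem stmt14 {S T : Type*} (act : T → S → Option S) (α : T) (n : ℕ)
    (σ : ℕ → S) (β : ℕ → T)
    (hstep : ∀ i < n, act (β i) (σ i) = some (σ (i + 1)))
    (hind : ∀ i < n, Indep (act α) (act (β i)))
    (hα : Enabled (act α) (σ 0)) :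
    Enabled (act α) (σ n) ∧
    ∃ τ : ℕ → S,
      act α (σ 0) = some (τ 0) ∧
      (∀ i < n, act (β i) (τ i) = some (τ (i + 1))) ∧
      act α (σ n) = some (τ n) := by
  induction n with
  | zero =>
    refine ⟨hα, fun _ => (act α (σ 0)).get hα, ?_, ?_, ?_⟩
    · exact (Option.some_get hα).symm
    · intro i hi; omega
    · exact (Option.some_get hα).symm
  | succ n ih =>
    obtain ⟨hen, τ, hτ0, hτstep, hτn⟩ :=
      ih (fun i hi => hstep i (by omega)) (fun i hi => hind i (by omega))
    have hβn : Enabled (act (β n)) (σ n) := by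
      unfold Enabled; rw [hstep n (by omega)]; rfl
    obtain ⟨⟨sβ, hsβ, hαsβ⟩, _, hcomm⟩ := hind n (by omega) (σ n) hen hβn
    rw [hstep n (by omega)] at hsβ
    obtain rfl : sβ = σ (n + 1) := by injection hsβ.symm
    rw [hstep n (by omega), hτn] at hcomm
    simp only [Option.bind_some] at hcomm
    have hsome : (act α (σ (n + 1))).isSome := hαsβ
    refine ⟨hαsβ, fun i => if i ≤ n then τ i else (act α (σ (n + 1))).get hsome,
      ?_, ?_, ?_⟩
    · show act α (σ 0) = some (if 0 ≤ n then τ 0 else _)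
      rw [if_pos (Nat.zero_le n)]; exact hτ0
    · intro i hi
      show act (β i) (if i ≤ n then τ i else _) = some (if i + 1 ≤ n then τ (i + 1) else _)
      rcases Nat.lt_or_ge i n with h | h
      · rw [if_pos (by omega : i ≤ n), if_pos (by omega : i + 1 ≤ n)]
        exact hτstep i h
      · obtain rfl : n = i := by omega
        rw [if_pos le_rfl, if_neg (by omega : ¬ n + 1 ≤ n)]
        rw [← hcomm]
        exact (Option.some_get hsome).symm
    · show act α (σ (n + 1)) = some (if n + 1 ≤ n then τ (n + 1) else _)
      rw [if_neg (by omega : ¬ n + 1 ≤ n)]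
      exact (Option.some_get hsome).symm
end

section
/- For the symbolic tick rule with clock separation: if the internal tick adds constraint T ≤ TIMER for a fresh variable T and updates timer to TIMER monus T, then under the accumulated constraint the updated timer symbolically equals TIMER − T; consequently two successive symbolic ticks with fresh variables T₁, T₂ and constraints T₁ ≤ TIMER ∧ T₂ ≤ TIMER − T₁ are equivalent (same set of concrete instances) to a single symbolic tick with fresh T and constraint T ≤ TIMER, under the substitution T = T₁ + T₂. -/
def monus (x y : ℝ) : ℝ := max (x - y) 0

/-- (a) Under the constraint `T ≤ TIMER`, `monus` is exact subtraction;
(b) two successive symbolic ticks with constraints `T₁ ≤ w` and `T₂ ≤ w − T₁`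
denote the same concrete instances as one tick with `T ≤ w` via `T = T₁ + T₂`. -/
theorem stmt18 (w : ℝ) (hw : 0 ≤ w) :
    (∀ T TIMER : ℝ, 0 ≤ T → T ≤ TIMER → monus TIMER T = TIMER - T) ∧
    ((fun p : ℝ × ℝ => p.1 + p.2) ''
        {p : ℝ × ℝ | 0 ≤ p.1 ∧ 0 ≤ p.2 ∧ p.1 ≤ w ∧ p.2 ≤ w - p.1}
      = {t : ℝ | 0 ≤ t ∧ t ≤ w}) ∧
    (∀ t₁ t₂ : ℝ, w - t₁ - t₂ = w - (t₁ + t₂)) := by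
  refine ⟨fun T TIMER hT h => ?_, ?_, fun t₁ t₂ => by ring⟩
  · simp [monus, max_eq_left, sub_nonneg.mpr h]
  · ext t
    constructor
    · rintro ⟨⟨a, b⟩, ⟨ha, hb, haw, hbw⟩, rfl⟩
      exact ⟨add_nonneg ha hb, by simp at haw hbw ⊢; linarith⟩
    · rintro ⟨ht0, htw⟩
      exact ⟨(t, 0), ⟨ht0, le_refl 0, htw, by simp; linarith⟩, by simp⟩
end
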